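/- Let Δ̌ and η̌ be the fermionic Laplacian and its dual on the exterior algebra Λ in θ_1,...,θ_m,ϑ_1,...,ϑ_m. Suppose 0 ≤ r < s ≤ m+1, ℓ is an integer with 1 ≤ ℓ ≤ s−r−1, and f ∈ Λ satisfies Δ̌(f)=0, Σ_{p=1}^m θ_p∂_{θ_p}(f) = r·f and Σ_{p=1}^m ϑ_p∂_{ϑ_p}(f) = (m+1−s)·f. Then Δ̌(η̌^ℓ f) = ℓ(ℓ + r − s)·η̌^{ℓ−1} f. -/

import Mathlib

noncomputable section

/-- Exterior algebra on θ_1,...,θ_m,ϑ_1,...,ϑ_m -/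
abbrev ExtA (m : ℕ) := ExteriorAlgebra ℂ ((Fin m ⊕ Fin m) → ℂ)

variable (m : ℕ)

def θv (r : Fin m) : ExtA m := ExteriorAlgebra.ι ℂ (Pi.single (Sum.inl r) 1)
def ϑv (r : Fin m) : ExtA m := ExteriorAlgebra.ι ℂ (Pi.single (Sum.inr r) 1)

/-- the odd superderivation ∂_{θ_r} (left contraction with the dual vector) -/
def dθ (r : Fin m) : Module.End ℂ (ExtA m) :=
  CliffordAlgebra.contractLeft (Q := (0 : QuadraticForm ℂ ((Fin m ⊕ Fin m) → ℂ)))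
    (LinearMap.proj (Sum.inl r))
/-- the odd superderivation ∂_{ϑ_r} -/
def dϑ (r : Fin m) : Module.End ℂ (ExtA m) :=
  CliffordAlgebra.contractLeft (Q := (0 : QuadraticForm ℂ ((Fin m ⊕ Fin m) → ℂ)))
    (LinearMap.proj (Sum.inr r))

/-- Δ̌ = Σ_r ∂_{θ_r}∂_{ϑ_r} -/
def Δc : Module.End ℂ (ExtA m) := ∑ r : Fin m, dθ m r ∘ₗ dϑ m r
/-- η̌ = multiplication by Σ_r θ_r ϑ_r -/
def ηc : Module.End ℂ (ExtA m) := LinearMap.mulLeft ℂ (∑ r : Fin m, θv m r * ϑv m r)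

/-- θ-degree operator Σ_p θ_p∂_{θ_p} -/
def degθ : Module.End ℂ (ExtA m) := ∑ p : Fin m, LinearMap.mulLeft ℂ (θv m p) ∘ₗ dθ m p
/-- ϑ-degree operator Σ_p ϑ_p∂_{ϑ_p} -/
def degϑ : Module.End ℂ (ExtA m) := ∑ p : Fin m, LinearMap.mulLeft ℂ (ϑv m p) ∘ₗ dϑ m p

/-! With `H := Σ θ_p ∂_{θ_p} + Σ ϑ_p ∂_{ϑ_p} - m`, the operators `Δ̌`, `η̌`, `H` satisfy the
`sl₂` relations `[Δ̌, η̌] = H` and `[H, η̌] = 2 η̌`. Both come from `[∂_{θ_p}, η̌] = ϑ_p` and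
`[∂_{ϑ_p}, η̌] = -θ_p`, which is the superderivation rule for contraction applied to the even
element `η̌ = Σ θ_q ϑ_q`. The hypotheses make `f` a vector killed by `Δ̌` with `H`-weight
`c = r + 1 - s`, and the usual `sl₂` computation gives `Δ̌ η̌^(k+1) f = (k+1)(c+k) η̌^k f`. -/

namespace ExteriorAlgebra

variable {R M : Type*} [CommRing R] [AddCommGroup M] [Module R M]

local notation "d" => CliffordAlgebra.contractLeft (Q := (0 : QuadraticForm R M))

theorem contractLeft_mul_mulLeft_ι (φ : Module.Dual R M) (v : M) :
    d φ * LinearMap.mulLeft R (ι R v) = φ v • 1 - LinearMap.mulLeft R (ι R v) * d φ :=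
  LinearMap.ext fun x => CliffordAlgebra.contractLeft_ι_mul φ v x

theorem contractLeft_mul_mulLeft_ι_mul_ι (φ : Module.Dual R M) (v w : M) :
    d φ * LinearMap.mulLeft R (ι R v * ι R w)
      = LinearMap.mulLeft R (ι R v * ι R w) * d φ
        + φ v • LinearMap.mulLeft R (ι R w) - φ w • LinearMap.mulLeft R (ι R v) := by
  rw [LinearMap.mulLeft_mul, ← Module.End.mul_eq_comp, ← mul_assoc, contractLeft_mul_mulLeft_ι,
    sub_mul, mul_assoc, contractLeft_mul_mulLeft_ι]
  simp only [mul_sub, mul_smul_comm, smul_mul_assoc, one_mul, mul_one, ← mul_assoc]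
  abel

theorem mulLeft_ι_mul_mulLeft_ι (u v : M) :
    LinearMap.mulLeft R (ι R u) * LinearMap.mulLeft R (ι R v)
      = -LinearMap.mulLeft R (ι R v * ι R u) :=
  LinearMap.ext fun x => by
    simp [← mul_assoc, CliffordAlgebra.ι_mul_ι_comm_of_isOrtho (QuadraticMap.IsOrtho.all u v)]

theorem commute_ι_ι_mul_ι (u v w : M) : Commute (ι R u) (ι R v * ι R w) := by
  have anticomm (a b : M) : ι R a * ι R b = -(ι R b * ι R a) :=
    CliffordAlgebra.ι_mul_ι_comm_of_isOrtho (.all a b)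
  simp only [Commute, SemiconjBy, ← mul_assoc, anticomm u v]
  simp only [mul_assoc, anticomm u w, neg_mul, mul_neg, neg_neg]

end ExteriorAlgebra

namespace Sl2

variable {R V : Type*} [CommRing R] [AddCommGroup V] [Module R V] {D E H : Module.End R V}
  {v : V} {c : R}

theorem weight_pow_apply (hHE : H * E = E * H + 2 • E) (hv : H v = c • v) (k : ℕ) :
    H ((E ^ k) v) = (c + 2 * k) • (E ^ k) v := by
  induction k with
  | zero => simpa using hv
  | succ k ih =>
    have step := LinearMap.congr_fun hHE ((E ^ k) v)
    simp only [Module.End.mul_apply, LinearMap.add_apply, LinearMap.smul_apply] at step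
    rw [pow_succ', Module.End.mul_apply, step, ih, map_smul]
    push_cast
    module

theorem lowering_pow_succ_apply (hDE : D * E = E * D + H) (hHE : H * E = E * H + 2 • E)
    (hD : D v = 0) (hv : H v = c • v) (k : ℕ) :
    D ((E ^ (k + 1)) v) = ((k + 1) * (c + k)) • (E ^ k) v := by
  induction k with
  | zero => simpa [hD, hv] using LinearMap.congr_fun hDE v
  | succ k ih =>
    have step := LinearMap.congr_fun hDE ((E ^ (k + 1)) v)
    simp only [Module.End.mul_apply, LinearMap.add_apply] at step
    rw [pow_succ', Module.End.mul_apply, step, ih, map_smul, ← Module.End.mul_apply E,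
      ← pow_succ', weight_pow_apply hHE hv]
    push_cast
    module

end Sl2

open LinearMap ExteriorAlgebra

theorem ηc_eq_sum : ηc m = ∑ q, mulLeft ℂ (θv m q * ϑv m q) :=
  map_sum (Algebra.lmul ℂ (ExtA m)) _ _

theorem commute_mulLeft_ι_ηc (v : (Fin m ⊕ Fin m) → ℂ) :
    Commute (mulLeft ℂ (ι ℂ v)) (ηc m) := by
  rw [ηc_eq_sum]
  exact Commute.sum_right _ _ _ fun q _ => (commute_ι_ι_mul_ι _ _ _).map (Algebra.lmul ℂ (ExtA m))

theorem dθ_mul_mulLeft_θv (p : Fin m) :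
    dθ m p * mulLeft ℂ (θv m p) = 1 - mulLeft ℂ (θv m p) * dθ m p := by
  rw [dθ, θv, contractLeft_mul_mulLeft_ι]
  simp

theorem dθ_mul_ηc (p : Fin m) : dθ m p * ηc m = ηc m * dθ m p + mulLeft ℂ (ϑv m p) := by
  have term (q : Fin m) : dθ m p * mulLeft ℂ (θv m q * ϑv m q)
      = mulLeft ℂ (θv m q * ϑv m q) * dθ m p + if q = p then mulLeft ℂ (ϑv m q) else 0 := by
    rw [dθ, θv, ϑv, contractLeft_mul_mulLeft_ι_mul_ι]
    simp [Pi.single_apply, eq_comm]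
  simp only [ηc_eq_sum, Finset.mul_sum, Finset.sum_mul, term, Finset.sum_add_distrib,
    Finset.sum_ite_eq', Finset.mem_univ, if_true]

theorem dϑ_mul_ηc (p : Fin m) : dϑ m p * ηc m = ηc m * dϑ m p - mulLeft ℂ (θv m p) := by
  have term (q : Fin m) : dϑ m p * mulLeft ℂ (θv m q * ϑv m q)
      = mulLeft ℂ (θv m q * ϑv m q) * dϑ m p - if q = p then mulLeft ℂ (θv m q) else 0 := by
    rw [dϑ, θv, ϑv, contractLeft_mul_mulLeft_ι_mul_ι]
    simp [Pi.single_apply, eq_comm]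
  simp only [ηc_eq_sum, Finset.mul_sum, Finset.sum_mul, term, Finset.sum_sub_distrib,
    Finset.sum_ite_eq', Finset.mem_univ, if_true]

theorem Δc_mul_ηc : Δc m * ηc m = ηc m * Δc m + (degθ m + degϑ m - (m : ℂ) • 1) := by
  have term (p : Fin m) : dθ m p * dϑ m p * ηc m = ηc m * (dθ m p * dϑ m p)
      + (mulLeft ℂ (θv m p) * dθ m p + mulLeft ℂ (ϑv m p) * dϑ m p - 1) := by
    rw [mul_assoc, dϑ_mul_ηc, mul_sub, ← mul_assoc, dθ_mul_ηc, dθ_mul_mulLeft_θv]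
    noncomm_ring
  simp only [Δc, degθ, degϑ, ← Module.End.mul_eq_comp, Finset.sum_mul, Finset.mul_sum, term,
    Finset.sum_add_distrib, Finset.sum_sub_distrib, Finset.sum_const, Finset.card_univ,
    Fintype.card_fin, Nat.cast_smul_eq_nsmul]

theorem degθ_mul_ηc : degθ m * ηc m = ηc m * degθ m + ηc m := by
  have term (p : Fin m) : mulLeft ℂ (θv m p) * dθ m p * ηc m
      = ηc m * (mulLeft ℂ (θv m p) * dθ m p) + mulLeft ℂ (θv m p * ϑv m p) := by
    have hc : Commute (mulLeft ℂ (θv m p)) (ηc m) := commute_mulLeft_ι_ηc m _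
    rw [mul_assoc, dθ_mul_ηc, mul_add, ← mul_assoc, hc.eq, mul_assoc]
    exact congrArg _ (map_mul (Algebra.lmul ℂ (ExtA m)) _ _).symm
  simp only [degθ, ← Module.End.mul_eq_comp, Finset.sum_mul, Finset.mul_sum, term,
    Finset.sum_add_distrib, ← ηc_eq_sum]

theorem degϑ_mul_ηc : degϑ m * ηc m = ηc m * degϑ m + ηc m := by
  have term (p : Fin m) : mulLeft ℂ (ϑv m p) * dϑ m p * ηc m
      = ηc m * (mulLeft ℂ (ϑv m p) * dϑ m p) + mulLeft ℂ (θv m p * ϑv m p) := by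
    have hc : Commute (mulLeft ℂ (ϑv m p)) (ηc m) := commute_mulLeft_ι_ηc m _
    rw [mul_assoc, dϑ_mul_ηc, mul_sub, ← mul_assoc, hc.eq, mul_assoc, sub_eq_add_neg]
    exact congrArg _ (neg_eq_iff_eq_neg.mpr (mulLeft_ι_mul_mulLeft_ι _ _))
  simp only [degϑ, ← Module.End.mul_eq_comp, Finset.sum_mul, Finset.mul_sum, term,
    Finset.sum_add_distrib, ← ηc_eq_sum]

theorem weight_mul_ηc :
    (degθ m + degϑ m - (m : ℂ) • 1) * ηc m
      = ηc m * (degθ m + degϑ m - (m : ℂ) • 1) + 2 • ηc m := by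
  simp only [add_mul, sub_mul, mul_add, mul_sub, smul_mul_assoc, mul_smul_comm, one_mul, mul_one,
    degθ_mul_ηc, degϑ_mul_ηc]
  abel

theorem delta_eta_pow_fermionic (r s ℓ : ℕ) (hs : s ≤ m + 1)
    (hℓ₁ : 1 ≤ ℓ) (f : ExtA m)
    (hf : Δc m f = 0) (hθ : degθ m f = (r : ℂ) • f)
    (hϑ : degϑ m f = ((m + 1 - s : ℕ) : ℂ) • f) :
    Δc m ((ηc m ^ ℓ) f)
      = ((ℓ : ℂ) * ((ℓ : ℂ) + r - s)) • (ηc m ^ (ℓ - 1)) f := by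
  obtain ⟨k, rfl⟩ : ∃ k, ℓ = k + 1 := ⟨ℓ - 1, by omega⟩
  have hweight : (degθ m + degϑ m - (m : ℂ) • 1) f = ((r : ℂ) + 1 - s) • f := by
    simp only [LinearMap.sub_apply, LinearMap.add_apply, LinearMap.smul_apply,
      Module.End.one_apply, hθ, hϑ, Nat.cast_sub hs]
    push_cast
    module
  rw [Nat.add_sub_cancel, Sl2.lowering_pow_succ_apply (Δc_mul_ηc m) (weight_mul_ηc m) hf hweight]
  congr 1
  push_cast
  ring
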